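/- For every n ∈ ℕ and every n-ary Boolean function f : Bool^n → Bool, there exists an instruction sequence X ∈ IS_br^na in which no forward jump instruction occurs, such that X computes f and psize(X) ≤ c·(n·2^n + 1), where c is a constant independent of n and f. -/

import Mathlib

/-- Boolean register names: `inp i` is input register `in:(i+1)`,
`aux i` is auxiliary register `aux:(i+1)`, `out` is the output register. -/
inductive Reg where
  | inp : ℕ → Reg
  | aux : ℕ → Reg
  | out : Reg
deriving DecidableEq

/-- Basic instructions: register reads/writes, and (for splitting instruction
sequences) `split p` and `reply p` for Boolean parameters `p`. -/
inductive BInstr where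
  | get : Reg → BInstr
  | set : Reg → Bool → BInstr
  | split : ℕ → BInstr
  | reply : ℕ → BInstr
deriving DecidableEq

/-- Primitive instructions. -/
inductive PInstr where
  | plain : BInstr → PInstr
  | pos : BInstr → PInstr
  | neg : BInstr → PInstr
  | jump : ℕ → PInstr
  | halt : PInstr
deriving DecidableEq

abbrev RegState := Reg → Bool

/-- State change caused by processing a basic instruction. -/
def BInstr.effect : BInstr → RegState → RegState
  | .set r b, s => Function.update s r b
  | _, s => s

/-- Reply produced by processing a basic instruction. -/
def BInstr.rpl : BInstr → RegState → Bool
  | .get r, s => s r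
  | .set _ b, _ => b
  | _, _ => false

def BInstr.isSplitReply : BInstr → Bool
  | .split _ => true
  | .reply _ => true
  | _ => false

/-- Single-thread execution of an instruction sequence on Boolean registers;
`none` means deadlock, `some s` means termination in register state `s`.
(`split`/`reply` instructions make no sense here and deadlock.) -/
def exec : List PInstr → RegState → Option RegState
  | [], _ => none
  | .plain a :: X, s =>
      if a.isSplitReply then none else exec X (a.effect s)
  | .pos a :: X, s =>
      if a.isSplitReply then none
      else if a.rpl s then exec X (a.effect s) else exec (X.drop 1) (a.effect s)
  | .neg a :: X, s =>
      if a.isSplitReply then none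
      else if a.rpl s then exec (X.drop 1) (a.effect s) else exec X (a.effect s)
  | .jump 0 :: _, _ => none
  | .jump (l+1) :: X, s => exec (X.drop l) s
  | .halt :: _, s => some s
termination_by X _ => X.length
decreasing_by all_goals (simp only [List.length_drop, List.length_cons]; omega)

/-- Initial register state: input registers `in:1 .. in:n` contain
`b 0, ..., b (n-1)`; all other registers contain `false`. -/
def initState (n : ℕ) (b : Fin n → Bool) : RegState := fun r =>
  match r with
  | .inp i => if h : i < n then b ⟨i, h⟩ else false
  | _ => false

/-- `X` computes the `n`-ary Boolean function `f`: for every input, execution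
terminates (does not deadlock) with the output register containing `f b`. -/
def Computes {n : ℕ} (f : (Fin n → Bool) → Bool) (X : List PInstr) : Prop :=
  ∀ b : Fin n → Bool, ∃ s : RegState,
    exec X (initState n b) = some s ∧ s Reg.out = f b

/-- Basic instructions allowed in `IS_br`. -/
def BrBasic : BInstr → Prop
  | .get (.inp _) => True
  | .get (.aux _) => True
  | .set (.aux _) _ => True
  | .set .out _ => True
  | _ => False

/-- Basic instructions allowed in `IS_br^na`. -/
def NaBasic : BInstr → Prop
  | .get (.inp _) => True
  | .set .out _ => True
  | _ => False

def InstrBasicOK (P : BInstr → Prop) : PInstr → Prop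
  | .plain a => P a
  | .pos a => P a
  | .neg a => P a
  | _ => True

/-- Membership of `IS_br` (non-empty, only allowed basic instructions). -/
def ISbr (X : List PInstr) : Prop :=
  X ≠ [] ∧ ∀ u ∈ X, InstrBasicOK BrBasic u

/-- Membership of `IS_br^na`. -/
def ISbrna (X : List PInstr) : Prop :=
  X ≠ [] ∧ ∀ u ∈ X, InstrBasicOK NaBasic u

/-- The primitive instruction contains the basic instruction `out.set:false`. -/
def UsesOutSetFalse : PInstr → Prop
  | .plain (.set .out false) => True
  | .pos (.set .out false) => True
  | .neg (.set .out false) => True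
  | _ => False

/-- The class PLIS of Boolean function families computable by
polynomial-length instruction sequences from `IS_br`. -/
def PLIS (F : (n : ℕ) → (Fin n → Bool) → Bool) : Prop :=
  ∃ h : Polynomial ℕ, ∀ n : ℕ, ∃ X : List PInstr,
    ISbr X ∧ Computes (F n) X ∧ X.length ≤ h.eval n

/-!
Tabulate `f`: for each of the `2^n` assignments `a` emit a block that tests the inputs
against `a` one by one and, if all agree, writes `f a` to `out` and halts. Without jumps,
a failed test must still reach the next block. This works because `+out.set:false`
always replies `false` and so skips the next instruction: once a test fails, the
`+out.set:false` placed after every test forms a chain, each one skipping the next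
test, up to the next block.
-/

namespace JumpFreeTable

def skipIfInput (i : ℕ) (v : Bool) : PInstr :=
  if v then .neg (.get (.inp i)) else .pos (.get (.inp i))

def setOutSkip (v : Bool) : PInstr :=
  if v then .neg (.set .out true) else .pos (.set .out false)

lemma exec_skipIfInput_cons (i : ℕ) (v : Bool) (X : List PInstr) (s : RegState) :
    exec (skipIfInput i v :: X) s = if s (.inp i) = v then exec (X.drop 1) s else exec X s := by
  cases v <;> cases h : s (.inp i) <;>
    simp [skipIfInput, exec, BInstr.isSplitReply, BInstr.rpl, BInstr.effect, h]

lemma exec_setOutSkip_cons_cons (v : Bool) (x : PInstr) (X : List PInstr) (s : RegState) :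
    exec (setOutSkip v :: x :: X) s = exec X (Function.update s .out v) := by
  cases v <;> simp [setOutSkip, exec, BInstr.isSplitReply, BInstr.rpl, BInstr.effect]

def guard (L : List (ℕ × Bool)) : List PInstr :=
  L.flatMap fun p => [skipIfInput p.1 p.2, setOutSkip false]

@[simp] lemma guard_nil : guard [] = [] := rfl

@[simp] lemma guard_cons (p : ℕ × Bool) (L : List (ℕ × Bool)) :
    guard (p :: L) = skipIfInput p.1 p.2 :: setOutSkip false :: guard L := rfl

@[simp] lemma length_guard (L : List (ℕ × Bool)) : (guard L).length = 2 * L.length := by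
  induction L with
  | nil => rfl
  | cons p L ih => simp only [guard_cons, List.length_cons, ih]; ring

lemma exec_setOutSkip_false_guard_append (L : List (ℕ × Bool)) (x : PInstr)
    (X : List PInstr) (s : RegState) :
    exec (setOutSkip false :: (guard L ++ x :: X)) s =
      exec X (Function.update s .out false) := by
  induction L generalizing s with
  | nil => exact exec_setOutSkip_cons_cons false x X s
  | cons p L ih =>
    rw [guard_cons, List.cons_append, List.cons_append, exec_setOutSkip_cons_cons, ih,
      Function.update_idem]

def minterm (L : List (ℕ × Bool)) (v : Bool) : List PInstr :=
  guard L ++ [setOutSkip v, setOutSkip false, .halt]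

@[simp] lemma length_minterm (L : List (ℕ × Bool)) (v : Bool) :
    (minterm L v).length = 2 * L.length + 3 := by
  simp [minterm]

lemma exec_minterm_append (L : List (ℕ × Bool)) (v : Bool) (rest : List PInstr)
    (s : RegState) :
    exec (minterm L v ++ rest) s =
      if ∀ p ∈ L, s (.inp p.1) = p.2 then some (Function.update s .out v)
      else exec rest (Function.update s .out false) := by
  induction L with
  | nil => simp [minterm, exec_setOutSkip_cons_cons, exec]
  | cons p L ih =>
    simp only [minterm, guard_cons, List.append_assoc, List.cons_append, List.nil_append,
      exec_skipIfInput_cons, List.forall_mem_cons] at ih ⊢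
    by_cases hp : s (.inp p.1) = p.2
    · simp only [hp, true_and, if_true, List.drop_one, List.tail_cons]
      exact ih
    · simp only [hp, if_false, false_and]
      rw [exec_setOutSkip_false_guard_append, exec_setOutSkip_cons_cons, Function.update_idem]

def assignmentPairs {n : ℕ} (a : Fin n → Bool) : List (ℕ × Bool) :=
  List.ofFn fun i => (i.1, a i)

@[simp] lemma length_assignmentPairs {n : ℕ} (a : Fin n → Bool) :
    (assignmentPairs a).length = n := by
  simp [assignmentPairs]

lemma forall_mem_assignmentPairs_iff {n : ℕ} (a : Fin n → Bool) (s : RegState) :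
    (∀ p ∈ assignmentPairs a, s (.inp p.1) = p.2) ↔ ∀ i : Fin n, s (.inp i) = a i := by
  simp [assignmentPairs, List.mem_ofFn]

def tableProgram {n : ℕ} (f : (Fin n → Bool) → Bool) (as : List (Fin n → Bool)) :
    List PInstr :=
  as.flatMap fun a => minterm (assignmentPairs a) (f a)

lemma length_tableProgram {n : ℕ} (f : (Fin n → Bool) → Bool) (as : List (Fin n → Bool)) :
    (tableProgram f as).length = as.length * (2 * n + 3) := by
  induction as with
  | nil => simp [tableProgram]
  | cons a as ih =>
    simp only [tableProgram, List.flatMap_cons, List.length_append] at ih ⊢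
    rw [ih, length_minterm, length_assignmentPairs, List.length_cons]
    ring

lemma exec_tableProgram {n : ℕ} (f : (Fin n → Bool) → Bool) {as : List (Fin n → Bool)}
    {b : Fin n → Bool} (hb : b ∈ as) {s : RegState} (hs : ∀ i : Fin n, s (.inp i) = b i) :
    exec (tableProgram f as) s = some (Function.update s .out (f b)) := by
  induction as generalizing s with
  | nil => simp at hb
  | cons a as ih =>
    have hmatch : (∀ p ∈ assignmentPairs a, s (.inp p.1) = p.2) ↔ b = a := by
      simp only [forall_mem_assignmentPairs_iff, hs, funext_iff]
    simp only [tableProgram, List.flatMap_cons, exec_minterm_append] at ih ⊢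
    by_cases hba : b = a
    · rw [if_pos (hmatch.mpr hba), hba]
    · have hb' : b ∈ as := (List.mem_cons.mp hb).resolve_left hba
      have hs' : ∀ i : Fin n, Function.update s .out false (.inp i) = b i := fun i => by
        simpa using hs i
      rw [if_neg (mt hmatch.mp hba), ih hb' hs', Function.update_idem]

lemma tableProgram_instr {n : ℕ} (f : (Fin n → Bool) → Bool) (as : List (Fin n → Bool)) :
    ∀ u ∈ tableProgram f as, InstrBasicOK NaBasic u ∧ ∀ l, u ≠ .jump l := by
  have hskip (i : ℕ) (v : Bool) : InstrBasicOK NaBasic (skipIfInput i v) ∧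
      ∀ l, skipIfInput i v ≠ .jump l := by
    cases v <;> simp [skipIfInput, InstrBasicOK, NaBasic]
  have hset (v : Bool) : InstrBasicOK NaBasic (setOutSkip v) ∧
      ∀ l, setOutSkip v ≠ .jump l := by
    cases v <;> simp [setOutSkip, InstrBasicOK, NaBasic]
  intro u hu
  simp only [tableProgram, minterm, guard, List.mem_flatMap, List.mem_append,
    List.mem_cons, List.not_mem_nil, or_false] at hu
  obtain ⟨-, -, ⟨p, -, rfl | rfl⟩ | rfl | rfl | rfl⟩ := hu
  · exact hskip _ _
  any_goals exact hset _
  simp [InstrBasicOK]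

lemma two_pow_mul_le (n : ℕ) : 2 ^ n * (2 * n + 3) ≤ 5 * (n * 2 ^ n + 1) := by
  have : 2 ^ n ≤ n * 2 ^ n + 1 := by
    rcases n with _ | m
    · simp
    · have := Nat.le_mul_of_pos_left (2 ^ (m + 1)) (show 0 < m + 1 by omega)
      omega
  nlinarith

end JumpFreeTable

open JumpFreeTable in
/-- Corollary 1 of the paper: every `n`-ary Boolean function is computed by an
instruction sequence from `IS_br^na` of length `O(n · 2^n)` containing no
jump instructions at all. -/
theorem statement2 :
    ∃ c : ℕ, ∀ (n : ℕ) (f : (Fin n → Bool) → Bool),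
      ∃ X : List PInstr, ISbrna X ∧
        (∀ l : ℕ, PInstr.jump l ∉ X) ∧
        Computes f X ∧ X.length ≤ c * (n * 2 ^ n + 1) := by
  refine ⟨5, fun n f => ?_⟩
  set X := tableProgram f (Finset.univ : Finset (Fin n → Bool)).toList
  have hlen : X.length = 2 ^ n * (2 * n + 3) := by
    simp [X, length_tableProgram]
  refine ⟨X, ⟨?_, fun u hu => (tableProgram_instr f _ u hu).1⟩,
    fun l hl => (tableProgram_instr f _ _ hl).2 l rfl, fun b => ?_, hlen ▸ two_pow_mul_le n⟩
  · rw [← List.length_pos_iff, hlen]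
    positivity
  · refine ⟨_, exec_tableProgram f (b := b) (by simp) (s := initState n b) (fun i => ?_), by simp⟩
    simp [initState]
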